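/- Fix β ∈ (0,1) and C_β ≥ 2. Let n ≥ 1 and N be integers with N ≥ n^{nβ/(1−β)}, set ε = (n√N)^{−1/(2−β)}, assume C_β·ε^β ≤ 1, and let t* = ⌈√(N · n^{nβ/(2−β)})⌉. Let Z* be a sample of m = n·t* i.i.d. draws from the fair source P = P_ε(σ), and let n̂_σ and n̂_{1−σ} denote the number of samples in Z* equal to (x1, σ) and (x1, 1−σ) respectively. Then P(n̂_{1−σ} ≥ n̂_σ) ≤ 2·exp(−n^{nβ/(2(2−β))}/(8·C_β)); consequently the empirical risk minimizer ĥ_{Z*} over H = {h0, h1} satisfies E[E_D(ĥ_{Z*})] ≤ 2·(n√N)^{−1/(2−β)}·exp(−n^{nβ/(2(2−β))}/(8·C_β)), where the target is D = P and the excess risk of the wrong hypothesis is E_D(h_{1−σ}) = ε. -/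
import Mathlib


/-- The Section-5 source distribution `P_ε(σ)` of the paper, on the three-point
sample space `Ω = {(x0,1), (x1,0), (x1,1)}` encoded as `Fin 3` with
`0 ↦ (x0,1)`, `1 ↦ (x1,0)`, `2 ↦ (x1,1)`: mass `1 − C_β ε^β` on `(x0,1)`,
mass `C_β ε^β (1/2 + (1/2) C_β⁻¹ ε^{1−β})` on `(x1,σ)` and mass
`C_β ε^β (1/2 − (1/2) C_β⁻¹ ε^{1−β})` on `(x1,1−σ)`. -/
noncomputable def srcPMF (Cβ β ε : ℝ) (σ : Bool) : Fin 3 → ℝ := fun ω =>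
  if ω = 0 then 1 - Cβ * ε ^ β
  else if ω = (if σ then 2 else 1) then
    Cβ * ε ^ β * (1/2 + (1/2) * Cβ⁻¹ * ε ^ (1 - β))
  else Cβ * ε ^ β * (1/2 - (1/2) * Cβ⁻¹ * ε ^ (1 - β))

/-- The probability, under `m` i.i.d. draws from `P_ε(σ)`, that the number of
samples equal to `(x1, 1−σ)` is at least the number of samples equal to
`(x1, σ)` (i.e. ERM fails to output `h_σ`). -/
noncomputable def ermFailProb (Cβ β ε : ℝ) (σ : Bool) (m : ℕ) : ℝ :=
  ∑ z : Fin m → Fin 3,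
    if (Finset.univ.filter (fun i => z i = (if σ then (1 : Fin 3) else 2))).card ≥
        (Finset.univ.filter (fun i => z i = (if σ then (2 : Fin 3) else 1))).card
    then ∏ i, srcPMF Cβ β ε σ (z i) else 0

lemma powCount (m : ℕ) (f : Fin 3 → ℝ) (z : Fin m → Fin 3) :
    ∏ i, f (z i) = ∏ ω : Fin 3, f ω ^ (Finset.univ.filter (fun i => z i = ω)).card := by
  rw [← Finset.prod_fiberwise' Finset.univ z f]
  exact Finset.prod_congr rfl fun ω _ => (Finset.prod_const _)

lemma pow_ineq (pg pb s : ℝ) (hg : 0 ≤ pg) (hb : 0 ≤ pb) (hs : 0 ≤ s)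
    (hbs : pb ≤ s) (hmul : pg * pb = s * s) (ng nb : ℕ) (h : ng ≤ nb) :
    pg ^ ng * pb ^ nb ≤ s ^ ng * s ^ nb := by
  obtain ⟨k, rfl⟩ := Nat.exists_eq_add_of_le h
  calc pg ^ ng * pb ^ (ng + k) = (pg * pb) ^ ng * pb ^ k := by ring
    _ = (s * s) ^ ng * pb ^ k := by rw [hmul]
    _ ≤ (s * s) ^ ng * s ^ k := by
        exact mul_le_mul_of_nonneg_left (pow_le_pow_left₀ hb hbs k) (by positivity)
    _ = s ^ ng * s ^ (ng + k) := by ring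

lemma core (p0 pg pb s : ℝ) (hp0 : 0 ≤ p0) (hg : 0 ≤ pg) (hb : 0 ≤ pb) (hs : 0 ≤ s)
    (hbs : pb ≤ s) (hmul : pg * pb = s * s) (m : ℕ) (G B : Fin 3)
    (hG : G ≠ 0) (hB : B ≠ 0) (hGB : G ≠ B) :
    (∑ z : Fin m → Fin 3,
      if (Finset.univ.filter (fun i => z i = B)).card ≥
          (Finset.univ.filter (fun i => z i = G)).card
      then ∏ i, (fun ω => if ω = 0 then p0 else if ω = G then pg else pb) (z i) else 0)
      ≤ (p0 + 2 * s) ^ m := by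
  set p : Fin 3 → ℝ := fun ω => if ω = 0 then p0 else if ω = G then pg else pb with hp
  set q : Fin 3 → ℝ := fun ω => if ω = 0 then p0 else s with hq
  have hqnn : ∀ ω, 0 ≤ q ω := by intro ω; simp only [hq]; split_ifs <;> assumption
  have hsum : ∑ ω, q ω = p0 + 2 * s := by
    have h1 : (1 : Fin 3) ≠ 0 := by decide
    have h2 : (2 : Fin 3) ≠ 0 := by decide
    simp [hq, Fin.sum_univ_three, h1, h2]; ring
  have hcompl : ({G, B} : Finset (Fin 3))ᶜ = {0} := by
    have hcard : ({G, B} : Finset (Fin 3)).card = 2 := by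
      rw [Finset.card_insert_of_notMem (by simp [hGB]), Finset.card_singleton]
    refine (Finset.eq_of_subset_of_card_le ?_ ?_).symm
    · intro ω hω
      simp only [Finset.mem_singleton] at hω
      subst hω
      rw [Finset.mem_compl]
      simp only [Finset.mem_insert, Finset.mem_singleton]
      push_neg
      exact ⟨Ne.symm hG, Ne.symm hB⟩
    · rw [Finset.card_compl, hcard, Finset.card_singleton]
      simp
  calc (∑ z : Fin m → Fin 3,
      if (Finset.univ.filter (fun i => z i = B)).card ≥
          (Finset.univ.filter (fun i => z i = G)).card
      then ∏ i, p (z i) else 0)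
      ≤ ∑ z : Fin m → Fin 3, ∏ i, q (z i) := by
        apply Finset.sum_le_sum
        intro z _
        split_ifs with hcond
        · rw [powCount m p z, powCount m q z]
          rw [← Finset.prod_mul_prod_compl ({G, B} : Finset (Fin 3)),
              ← Finset.prod_mul_prod_compl ({G, B} : Finset (Fin 3)) (fun ω => q ω ^ _)]
          rw [hcompl]
          apply mul_le_mul_of_nonneg_right
          · rw [Finset.prod_pair hGB, Finset.prod_pair hGB]
            have hpG : p G = pg := by simp [hp, hG]
            have hpB : p B = pb := by simp [hp, hB, Ne.symm hGB]
            have hqG : q G = s := by simp [hq, hG]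
            have hqB : q B = s := by simp [hq, hB]
            rw [hpG, hpB, hqG, hqB]
            exact pow_ineq pg pb s hg hb hs hbs hmul _ _ hcond
          · rw [Finset.prod_singleton]
            have : p 0 = q 0 := by simp [hp, hq]
            rw [this]
            positivity
        · exact Finset.prod_nonneg fun i _ => hqnn _
    _ = (∑ ω, q ω) ^ m := (Fintype.sum_pow q m).symm
    _ = (p0 + 2 * s) ^ m := by rw [hsum]

set_option maxHeartbeats 1000000 in
/-- Theorem 5.1 of the paper.  With `β ∈ (0,1)`, `C_β ≥ 2`,
`N ≥ n^{nβ/(1−β)}`, `ε = (n√N)^{−1/(2−β)}`, `t* = ⌈√(N·n^{nβ/(2−β)})⌉` and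
`Z*` a sample of `m = n·t*` i.i.d. draws from the fair source `P_ε(σ)`, the
probability that ERM errs is at most `2·exp(−n^{nβ/(2(2−β))}/(8C_β))`, hence
`E[E_D(ĥ_{Z*})] ≤ 2·(n√N)^{−1/(2−β)}·exp(−n^{nβ/(2(2−β))}/(8C_β))`. -/
theorem stmt10 (β Cβ : ℝ) (hβ : β ∈ Set.Ioo (0:ℝ) 1) (hC : 2 ≤ Cβ)
    (n N : ℕ) (hn : 1 ≤ n) (hN : (n:ℝ) ^ ((n*β)/(1-β)) ≤ (N:ℝ))
    (σ : Bool)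
    (ε : ℝ) (hε : ε = ((n:ℝ) * Real.sqrt N) ^ (-(1/(2-β))))
    (hCε : Cβ * ε ^ β ≤ 1)
    (tstar : ℕ) (htstar : tstar = ⌈Real.sqrt ((N:ℝ) * (n:ℝ) ^ ((n*β)/(2-β)))⌉₊)
    (m : ℕ) (hm : m = n * tstar) :
    ermFailProb Cβ β ε σ m
        ≤ 2 * Real.exp (-((n:ℝ) ^ ((n*β)/(2*(2-β)))) / (8*Cβ)) ∧
      ε * ermFailProb Cβ β ε σ m
        ≤ 2 * ((n:ℝ) * Real.sqrt N) ^ (-(1/(2-β)))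
            * Real.exp (-((n:ℝ) ^ ((n*β)/(2*(2-β)))) / (8*Cβ)) := by
  obtain ⟨hβ0, hβ1⟩ := hβ
  have h2β : (0:ℝ) < 2 - β := by linarith
  have hn1 : (1:ℝ) ≤ (n:ℝ) := by exact_mod_cast hn
  have hn0 : (0:ℝ) < (n:ℝ) := by linarith
  have hN1 : (1:ℝ) ≤ (N:ℝ) := le_trans (Real.one_le_rpow hn1 (div_nonneg (by positivity) (by linarith))) hN
  have hsN1 : (1:ℝ) ≤ Real.sqrt (N:ℝ) := by
    rw [show (1:ℝ) = Real.sqrt 1 by simp]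
    exact Real.sqrt_le_sqrt hN1
  have hsN0 : (0:ℝ) < Real.sqrt (N:ℝ) := by linarith
  have hB1 : (1:ℝ) ≤ (n:ℝ) * Real.sqrt (N:ℝ) := by
    calc (1:ℝ) = 1 * 1 := by norm_num
      _ ≤ (n:ℝ) * Real.sqrt (N:ℝ) := mul_le_mul hn1 hsN1 zero_le_one (by linarith)
  have hB0 : (0:ℝ) < (n:ℝ) * Real.sqrt (N:ℝ) := by linarith
  have hε0 : 0 < ε := by rw [hε]; exact Real.rpow_pos_of_pos hB0 _
  have hε1 : ε ≤ 1 := by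
    rw [hε]
    apply Real.rpow_le_one_of_one_le_of_nonpos hB1
    have : 0 < 1/(2-β) := by positivity
    linarith
  have hC0 : (0:ℝ) < Cβ := by linarith
  have hεβ : 0 < ε ^ β := Real.rpow_pos_of_pos hε0 β
  have hA0 : 0 < Cβ * ε ^ β := mul_pos hC0 hεβ
  have hCinv : Cβ⁻¹ ≤ 1/2 := by
    rw [show (1/2:ℝ) = 2⁻¹ by norm_num]
    exact inv_anti₀ (by norm_num) hC
  have hδ1 : ε ^ (1-β) ≤ 1 := Real.rpow_le_one hε0.le hε1 (by linarith)
  have hδ0 : 0 ≤ Cβ⁻¹ * ε ^ (1-β) := by positivity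
  have hδ : Cβ⁻¹ * ε ^ (1-β) ≤ 1/2 := by
    calc Cβ⁻¹ * ε ^ (1-β) ≤ Cβ⁻¹ * 1 := by
          exact mul_le_mul_of_nonneg_left hδ1 (by positivity)
      _ ≤ 1/2 := by rw [mul_one]; exact hCinv
  have hAδ : (Cβ * ε ^ β) * (Cβ⁻¹ * ε ^ (1-β)) = ε := by
    rw [show (Cβ * ε ^ β) * (Cβ⁻¹ * ε ^ (1-β)) = (Cβ * Cβ⁻¹) * (ε ^ β * ε ^ (1-β)) by ring,
        mul_inv_cancel₀ (ne_of_gt hC0), ← Real.rpow_add hε0,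
        show β + (1-β) = (1:ℝ) by ring, Real.rpow_one, one_mul]
  have hεA : ε ≤ Cβ * ε ^ β := by
    calc ε = (Cβ * ε ^ β) * (Cβ⁻¹ * ε ^ (1-β)) := hAδ.symm
      _ ≤ (Cβ * ε ^ β) * 1 := mul_le_mul_of_nonneg_left (by linarith) hA0.le
      _ = Cβ * ε ^ β := mul_one _
  -- abbreviations
  set A := Cβ * ε ^ β with hAdef
  set pg : ℝ := Cβ * ε ^ β * (1/2 + (1/2) * Cβ⁻¹ * ε ^ (1 - β)) with hpgdef
  set pb : ℝ := Cβ * ε ^ β * (1/2 - (1/2) * Cβ⁻¹ * ε ^ (1 - β)) with hpbdef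
  have hg : 0 ≤ pg := by
    rw [hpgdef]; exact mul_nonneg hA0.le (by linarith)
  have hb : 0 ≤ pb := by
    rw [hpbdef]; exact mul_nonneg hA0.le (by linarith)
  have hpgpb : pg * pb = (A * A - ε * ε)/4 := by
    have h1 : pg * pb
        = (A * A - (A * (Cβ⁻¹ * ε ^ (1-β))) * (A * (Cβ⁻¹ * ε ^ (1-β))))/4 := by
      rw [hpgdef, hpbdef, hAdef]; ring
    rw [h1, hAδ]
  have hpgpb0 : 0 ≤ pg * pb := by
    rw [hpgpb]
    apply div_nonneg _ (by norm_num)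
    have := mul_self_le_mul_self hε0.le hεA
    linarith
  set s : ℝ := Real.sqrt (pg * pb) with hsdef
  have hs : 0 ≤ s := Real.sqrt_nonneg _
  have hmul : pg * pb = s * s := (Real.mul_self_sqrt hpgpb0).symm
  have hbg : pb ≤ pg := by
    rw [hpgdef, hpbdef]
    exact mul_le_mul_of_nonneg_left (by linarith) hA0.le
  have hbs : pb ≤ s := by
    calc pb = Real.sqrt (pb * pb) := (Real.sqrt_mul_self hb).symm
      _ ≤ s := Real.sqrt_le_sqrt (mul_le_mul_of_nonneg_right hbg hb)
  have hp0 : 0 ≤ 1 - A := by rw [hAdef]; linarith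
  -- ERM failure probability bound via the core lemma
  have hGne : (if σ then (2:Fin 3) else 1) ≠ 0 := by cases σ <;> decide
  have hBne : (if σ then (1:Fin 3) else 2) ≠ 0 := by cases σ <;> decide
  have hGBne : (if σ then (2:Fin 3) else 1) ≠ (if σ then (1:Fin 3) else 2) := by
    cases σ <;> decide
  have hF : ermFailProb Cβ β ε σ m ≤ ((1 - A) + 2 * s) ^ m := by
    have h := core (1 - A) pg pb s hp0 hg hb hs hbs hmul m
      (if σ then 2 else 1) (if σ then 1 else 2) hGne hBne hGBne
    unfold ermFailProb srcPMF
    exact h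
  -- analytic bound on the base
  set u : ℝ := ε * ε / (2 * A) with hudef
  have hu : 2 * A * u = ε * ε := by
    rw [hudef]; field_simp
  have hAu : u ≤ A / 2 := by
    rw [hudef, div_le_div_iff₀ (by positivity) (by norm_num)]
    have := mul_self_le_mul_self hε0.le hεA
    linarith
  have hus : s ≤ (A - u)/2 := by
    have hsq : pg * pb ≤ ((A - u)/2)^2 := by
      rw [hpgpb, show ε * ε = 2 * A * u from hu.symm]
      have := sq_nonneg u
      ring_nf
      ring_nf at this
      linarith
    calc s ≤ Real.sqrt (((A - u)/2)^2) := Real.sqrt_le_sqrt hsq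
      _ = (A - u)/2 := Real.sqrt_sq (by linarith [hAu, hA0])
  have hS : (1 - A) + 2 * s ≤ Real.exp (-u) := by
    have h1 := Real.add_one_le_exp (-u)
    linarith [hus]
  have hS0 : 0 ≤ (1 - A) + 2 * s := by linarith
  have hSm : ((1 - A) + 2 * s) ^ m ≤ Real.exp ((m:ℝ) * (-u)) := by
    calc ((1 - A) + 2 * s) ^ m ≤ (Real.exp (-u)) ^ m := pow_le_pow_left₀ hS0 hS m
      _ = Real.exp ((m:ℝ) * (-u)) := (Real.exp_nat_mul _ m).symm
  -- identify u
  have hε2 : ε * ε = ε ^ ((2:ℝ) - β) * ε ^ β := by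
    rw [← Real.rpow_add hε0, show (2:ℝ) - β + β = ((2:ℕ):ℝ) by push_cast; ring,
        Real.rpow_natCast]
    ring
  have hu_eq : u = ε ^ ((2:ℝ) - β) / (2 * Cβ) := by
    rw [hudef, hε2, hAdef]
    field_simp
  have hεpow : ε ^ ((2:ℝ) - β) = ((n:ℝ) * Real.sqrt (N:ℝ))⁻¹ := by
    rw [hε, ← Real.rpow_mul hB0.le, show -(1/(2-β)) * (2 - β) = -1 by field_simp,
        Real.rpow_neg_one]
  -- the key count bound
  set K : ℝ := (n:ℝ) ^ ((n*β)/(2*(2-β))) with hKdef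
  have hK0 : 0 ≤ K := Real.rpow_nonneg hn0.le _
  have hsqrtK : Real.sqrt ((N:ℝ) * (n:ℝ) ^ ((n*β)/(2-β))) = Real.sqrt (N:ℝ) * K := by
    rw [Real.sqrt_mul (by positivity : (0:ℝ) ≤ (N:ℝ))]
    congr 1
    rw [Real.sqrt_eq_rpow, ← Real.rpow_mul hn0.le, hKdef]
    congr 1
    field_simp
  have htle : Real.sqrt (N:ℝ) * K ≤ (tstar:ℝ) := by
    rw [htstar, ← hsqrtK]
    exact Nat.le_ceil _
  have humu : (m:ℝ) * u = (tstar:ℝ) / (Real.sqrt (N:ℝ) * (2 * Cβ)) := by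
    rw [hu_eq, hεpow, hm]
    push_cast
    field_simp
  have htsN : K ≤ (tstar:ℝ) / Real.sqrt (N:ℝ) := by
    rw [le_div_iff₀ hsN0]
    calc K * Real.sqrt (N:ℝ) = Real.sqrt (N:ℝ) * K := mul_comm _ _
      _ ≤ (tstar:ℝ) := htle
  have hmu : K / (8 * Cβ) ≤ (m:ℝ) * u := by
    rw [humu]
    calc K / (8 * Cβ) ≤ ((tstar:ℝ) / Real.sqrt (N:ℝ)) / (8 * Cβ) := by
          exact (div_le_div_iff_of_pos_right (by linarith : (0:ℝ) < 8 * Cβ)).mpr htsN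
      _ ≤ ((tstar:ℝ) / Real.sqrt (N:ℝ)) / (2 * Cβ) := by
          apply div_le_div_of_nonneg_left (by positivity) (by positivity) (by linarith)
      _ = (tstar:ℝ) / (Real.sqrt (N:ℝ) * (2 * Cβ)) := by rw [div_div]
  have hexp : Real.exp ((m:ℝ) * (-u)) ≤ Real.exp (-K / (8 * Cβ)) := by
    apply Real.exp_le_exp.mpr
    rw [neg_div, mul_neg]
    exact neg_le_neg hmu
  have hmain : ermFailProb Cβ β ε σ m ≤ 2 * Real.exp (-K / (8 * Cβ)) := by
    have hpos := Real.exp_pos (-K / (8 * Cβ))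
    calc ermFailProb Cβ β ε σ m ≤ ((1 - A) + 2 * s) ^ m := hF
      _ ≤ Real.exp ((m:ℝ) * (-u)) := hSm
      _ ≤ Real.exp (-K / (8 * Cβ)) := hexp
      _ ≤ 2 * Real.exp (-K / (8 * Cβ)) := by linarith
  refine ⟨hmain, ?_⟩
  calc ε * ermFailProb Cβ β ε σ m
      ≤ ε * (2 * Real.exp (-K / (8 * Cβ))) := by
        exact mul_le_mul_of_nonneg_left hmain hε0.le
    _ = 2 * ((n:ℝ) * Real.sqrt (N:ℝ)) ^ (-(1/(2-β))) * Real.exp (-K / (8 * Cβ)) := by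
        rw [hε]; ring
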